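/- arXiv:1008.3722 — 3 statements merged into one kernel-verified Lean document; each statement's English description precedes it below -/
import Mathlib

section
/- For β > 0, the only continuous function ŷ : [0,T] → ℝ satisfying the integral equation ŷ(t) = ∫_0^t (β/s) ∫_0^s ŷ(u) du ds for all t ∈ [0,T] is the zero function. -/
/-!
Iterating the equation improves any bound `|ŷ| ≤ K u ^ n` on `[0, t]` to
`|ŷ t| ≤ β K t ^ (n + 1) / (n + 1) ^ 2`: the inner integral gains a factor `s / (n + 1)`, which
cancels the singular weight `β / s`, and the outer one a factor `t / (n + 1)`. Starting from a
uniform bound `C` this gives `|ŷ t| ≤ C (β t) ^ n / (n!) ^ 2` for every `n`, and the right-hand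
side tends to `0`.
-/

open MeasureTheory Filter Topology Set Nat

lemma abs_intervalIntegral_le_of_abs_le_mul_pow {f : ℝ → ℝ} {K s : ℝ} (n : ℕ) (hs : 0 ≤ s)
    (hf : ∀ u ∈ Ioc 0 s, |f u| ≤ K * u ^ n) :
    |∫ u in (0 : ℝ)..s, f u| ≤ K * s ^ (n + 1) / (n + 1) := by
  have hbound := intervalIntegral.norm_integral_le_of_norm_le (μ := volume) hs
    (Eventually.of_forall fun u hu ↦ (Real.norm_eq_abs (f u)).trans_le (hf u hu))
    ((by fun_prop : Continuous fun u : ℝ ↦ K * u ^ n).intervalIntegrable 0 s)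
  rw [intervalIntegral.integral_const_mul, integral_pow, zero_pow n.succ_ne_zero, sub_zero]
    at hbound
  simpa only [Real.norm_eq_abs, mul_div_assoc] using hbound

lemma abs_integral_div_mul_integral_le {y : ℝ → ℝ} {β K t : ℝ} (n : ℕ) (hβ : 0 ≤ β) (ht : 0 ≤ t)
    (hy : ∀ u ∈ Ioc 0 t, |y u| ≤ K * u ^ n) :
    |∫ s in (0 : ℝ)..t, (β / s) * ∫ u in (0 : ℝ)..s, y u|
      ≤ β * K / (n + 1) ^ 2 * t ^ (n + 1) := by
  have hinner : ∀ s ∈ Ioc 0 t, |(β / s) * ∫ u in (0 : ℝ)..s, y u| ≤ β * K / (n + 1) * s ^ n := by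
    rintro s ⟨hs, hst⟩
    have := abs_intervalIntegral_le_of_abs_le_mul_pow n hs.le
      fun u hu ↦ hy u ⟨hu.1, hu.2.trans hst⟩
    calc |(β / s) * ∫ u in (0 : ℝ)..s, y u|
        ≤ β / s * (K * s ^ (n + 1) / (n + 1)) := by
          rw [abs_mul, abs_of_nonneg (div_nonneg hβ hs.le)]
          gcongr
      _ = β * K / (n + 1) * s ^ n := by
          field_simp
          ring
  calc _ ≤ β * K / (n + 1) * t ^ (n + 1) / (n + 1) :=
        abs_intervalIntegral_le_of_abs_le_mul_pow n ht hinner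
    _ = β * K / (n + 1) ^ 2 * t ^ (n + 1) := by
        field_simp

lemma abs_le_of_eq_integral_div_mul_integral {y : ℝ → ℝ} {β T C : ℝ} (hβ : 0 ≤ β)
    (heq : ∀ t ∈ Icc (0 : ℝ) T, y t = ∫ s in (0 : ℝ)..t, (β / s) * ∫ u in (0 : ℝ)..s, y u)
    (hC : ∀ t ∈ Icc (0 : ℝ) T, |y t| ≤ C) (n : ℕ) :
    ∀ t ∈ Icc (0 : ℝ) T, |y t| ≤ C * β ^ n / (n ! : ℝ) ^ 2 * t ^ n := by
  induction n with
  | zero => simpa using hC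
  | succ n ih =>
    intro t ht
    calc |y t| ≤ β * (C * β ^ n / (n ! : ℝ) ^ 2) / (n + 1) ^ 2 * t ^ (n + 1) := by
          rw [heq t ht]
          exact abs_integral_div_mul_integral_le n hβ ht.1
            fun u hu ↦ ih u ⟨hu.1.le, hu.2.trans ht.2⟩
      _ = C * β ^ (n + 1) / ((n + 1) ! : ℝ) ^ 2 * t ^ (n + 1) := by
          rw [factorial_succ]
          push_cast
          field_simp
          ring

lemma tendsto_pow_div_factorial_sq_atTop (x : ℝ) :
    Tendsto (fun n : ℕ ↦ x ^ n / (n ! : ℝ) ^ 2) atTop (𝓝 0) := by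
  have := (FloorSemiring.tendsto_pow_div_factorial_atTop x).mul
    (FloorSemiring.tendsto_pow_div_factorial_atTop (1 : ℝ))
  rw [mul_zero] at this
  exact this.congr fun n ↦ by rw [one_pow]; ring

theorem integral_equation_zero_general (β T : ℝ) (hβ : 0 < β)
    (y : ℝ → ℝ) (hc : ContinuousOn y (Set.Icc 0 T))
    (heq : ∀ t ∈ Set.Icc (0 : ℝ) T,
      y t = ∫ s in (0 : ℝ)..t, (β / s) * ∫ u in (0 : ℝ)..s, y u) :
    ∀ t ∈ Set.Icc (0 : ℝ) T, y t = 0 := by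
  obtain ⟨C, hC⟩ := isCompact_Icc.exists_bound_of_continuousOn hc
  intro t ht
  have hbound := abs_le_of_eq_integral_div_mul_integral hβ.le heq hC
  have hlim : Tendsto (fun n : ℕ ↦ C * β ^ n / (n ! : ℝ) ^ 2 * t ^ n) atTop (𝓝 0) := by
    have := (tendsto_pow_div_factorial_sq_atTop (β * t)).const_mul C
    rw [mul_zero] at this
    exact this.congr fun n ↦ by ring
  exact abs_nonpos_iff.mp (ge_of_tendsto' hlim fun n ↦ hbound n t ht)

/-- For `β > 0`, the only continuous function `ŷ : [0,T] → ℝ` satisfying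
`ŷ(t) = ∫_0^t (β/s) ∫_0^s ŷ(u) du ds` on `[0,T]` is the zero function. -/
theorem integral_equation_zero (β T : ℝ) (hβ : 0 < β) (hT : 0 < T)
    (y : ℝ → ℝ) (hc : ContinuousOn y (Set.Icc 0 T))
    (heq : ∀ t ∈ Set.Icc (0 : ℝ) T,
      y t = ∫ s in (0 : ℝ)..t, (β / s) * ∫ u in (0 : ℝ)..s, y u) :
    ∀ t ∈ Set.Icc (0 : ℝ) T, y t = 0 :=
  integral_equation_zero_general β T hβ y hc heq
end

section
/- For β > 0, any continuous solution y : [0,T] → ℝ of the integral equation y(t) = y(0) + ∫_0^t (β/s) ∫_0^s y(u) du ds + f(t), where f is continuous with f(0) = 0, is unique: if y and ỹ are two continuous solutions with the same initial value y(0) = ỹ(0) and same f, then y = ỹ on [0,T]. -/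
/-!
The difference `z` of two solutions solves the homogeneous equation `z = H z`, where
`H g t = ∫₀ᵗ (β / s) ∫₀ˢ g` (`integralOfMean β g t`). Averaging over `[0, s]` and
integrating turns a bound `|g u| ≤ c uⁿ` into `|H g t| ≤ |β| c tⁿ⁺¹ / (n + 1)²`, so iterating
from a bound `M` for `z` gives `|z t| ≤ M |β|ⁿ tⁿ / (n!)²`, which tends to `0`.
-/

open MeasureTheory intervalIntegral Set Filter Nat

noncomputable def integralOfMean (β : ℝ) (g : ℝ → ℝ) (t : ℝ) : ℝ :=
  ∫ s in (0 : ℝ)..t, β / s * ∫ u in (0 : ℝ)..s, g u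

section

variable {g : ℝ → ℝ} {c s t : ℝ} {n : ℕ}

theorem abs_integral_le_mul_pow_succ_div (hs : 0 ≤ s) (hg : ∀ u ∈ Ioc 0 s, |g u| ≤ c * u ^ n) :
    |∫ u in (0 : ℝ)..s, g u| ≤ c * s ^ (n + 1) / (n + 1) := by
  calc |∫ u in (0 : ℝ)..s, g u| ≤ ∫ u in (0 : ℝ)..s, c * u ^ n :=
        norm_integral_le_of_norm_le (μ := volume) (f := g) hs (ae_of_all _ hg)
          (by apply Continuous.intervalIntegrable; fun_prop)
    _ = c * s ^ (n + 1) / (n + 1) := by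
      rw [intervalIntegral.integral_const_mul, integral_pow, zero_pow (succ_ne_zero n), sub_zero]; ring

theorem abs_div_mul_integral_le (β : ℝ) (hs : 0 < s) (hg : ∀ u ∈ Ioc 0 s, |g u| ≤ c * u ^ n) :
    |β / s * ∫ u in (0 : ℝ)..s, g u| ≤ |β| * c / (n + 1) * s ^ n := by
  rw [abs_mul, abs_div, abs_of_pos hs]
  calc |β| / s * |∫ u in (0 : ℝ)..s, g u| ≤ |β| / s * (c * s ^ (n + 1) / (n + 1)) := by
        gcongr; exact abs_integral_le_mul_pow_succ_div hs.le hg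
    _ = |β| * c / (n + 1) * s ^ n := by field_simp; ring

theorem abs_integralOfMean_le (β : ℝ) (ht : 0 ≤ t) (hg : ∀ u ∈ Ioc 0 t, |g u| ≤ c * u ^ n) :
    |integralOfMean β g t| ≤ |β| * c / (n + 1) ^ 2 * t ^ (n + 1) := by
  have hmean : ∀ s ∈ Ioc 0 t, |β / s * ∫ u in (0 : ℝ)..s, g u| ≤ |β| * c / (n + 1) * s ^ n :=
    fun s hs => abs_div_mul_integral_le β hs.1 fun u hu => hg u ⟨hu.1, hu.2.trans hs.2⟩
  calc |integralOfMean β g t| ≤ |β| * c / (n + 1) * t ^ (n + 1) / (n + 1) :=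
        abs_integral_le_mul_pow_succ_div ht hmean
    _ = |β| * c / (n + 1) ^ 2 * t ^ (n + 1) := by field_simp

theorem intervalIntegrable_div_mul_integral (β : ℝ) (ht : 0 ≤ t)
    (hg : ContinuousOn g (Icc 0 t)) :
    IntervalIntegrable (fun s => β / s * ∫ u in (0 : ℝ)..s, g u) volume 0 t := by
  obtain ⟨C, hC⟩ := isCompact_Icc.exists_bound_of_continuousOn hg
  have hprimitive : ContinuousOn (fun s => ∫ u in (0 : ℝ)..s, g u) (Icc 0 t) := by
    simpa only [uIcc_of_le ht] using
      continuousOn_primitive_interval (hg.integrableOn_Icc.mono_set (uIcc_of_le ht).subset)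
  refine (intervalIntegrable_const (c := |β| * C)).mono_fun' ?_ ?_
  · rw [uIoc_of_le ht]
    refine ContinuousOn.aestronglyMeasurable ?_ measurableSet_Ioc
    exact (continuousOn_const.div continuousOn_id fun s hs => hs.1.ne').mul
      (hprimitive.mono Ioc_subset_Icc_self)
  · rw [uIoc_of_le ht]
    filter_upwards [ae_restrict_mem measurableSet_Ioc] with s hs
    simpa only [Real.norm_eq_abs, CharP.cast_eq_zero, zero_add, div_one, pow_zero, mul_one] using
      abs_div_mul_integral_le (n := 0) β hs.1
        fun u hu => by simpa using hC u ⟨hu.1.le, hu.2.trans hs.2⟩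

theorem integralOfMean_sub (β : ℝ) {h : ℝ → ℝ} (ht : 0 ≤ t) (hg : ContinuousOn g (Icc 0 t))
    (hh : ContinuousOn h (Icc 0 t)) :
    integralOfMean β (g - h) t = integralOfMean β g t - integralOfMean β h t := by
  unfold integralOfMean
  rw [← integral_sub (intervalIntegrable_div_mul_integral β ht hg)
    (intervalIntegrable_div_mul_integral β ht hh)]
  refine integral_congr fun s hs => ?_
  rw [uIcc_of_le ht] at hs
  have hsub : Icc 0 s ⊆ Icc 0 t := Icc_subset_Icc_right hs.2
  simp only [Pi.sub_apply]
  rw [integral_sub ((hg.mono hsub).intervalIntegrable_of_Icc hs.1)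
    ((hh.mono hsub).intervalIntegrable_of_Icc hs.1), mul_sub]

end

theorem eq_zero_of_eq_integralOfMean {β T : ℝ} {z : ℝ → ℝ} (hcz : ContinuousOn z (Icc 0 T))
    (hz : ∀ t ∈ Icc 0 T, z t = integralOfMean β z t) : ∀ t ∈ Icc 0 T, z t = 0 := by
  obtain ⟨M, hM⟩ := isCompact_Icc.exists_bound_of_continuousOn hcz
  have hbound : ∀ n : ℕ, ∀ t ∈ Icc 0 T, |z t| ≤ M * |β| ^ n / (n ! : ℝ) ^ 2 * t ^ n := by
    intro n
    induction n with
    | zero => intro t ht; simpa using hM t ht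
    | succ n ih =>
      intro t ht
      rw [hz t ht]
      calc |integralOfMean β z t|
          ≤ |β| * (M * |β| ^ n / (n ! : ℝ) ^ 2) / (n + 1) ^ 2 * t ^ (n + 1) :=
            abs_integralOfMean_le β ht.1 fun u hu => ih u ⟨hu.1.le, hu.2.trans ht.2⟩
        _ = M * |β| ^ (n + 1) / ((n + 1)! : ℝ) ^ 2 * t ^ (n + 1) := by
            rw [factorial_succ]; push_cast; field_simp; ring
  intro t ht
  have hlim : Tendsto (fun n : ℕ => M * |β| ^ n / (n ! : ℝ) ^ 2 * t ^ n) atTop (nhds 0) := by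
    have := ((FloorSemiring.tendsto_pow_div_factorial_atTop (|β| * t)).mul
      (FloorSemiring.tendsto_pow_div_factorial_atTop (1 : ℝ))).const_mul M
    rw [mul_zero, mul_zero] at this
    refine this.congr fun n => ?_
    rw [one_pow, mul_pow]; ring
  exact abs_nonpos_iff.mp (ge_of_tendsto' hlim fun n => hbound n t ht)

theorem integral_equation_unique_general (β T : ℝ)
    (f : ℝ → ℝ)
    (y ytilde : ℝ → ℝ)
    (hcy : ContinuousOn y (Set.Icc 0 T)) (hcyt : ContinuousOn ytilde (Set.Icc 0 T))
    (h0 : y 0 = ytilde 0)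
    (heqy : ∀ t ∈ Set.Icc (0 : ℝ) T,
      y t = y 0 + (∫ s in (0 : ℝ)..t, (β / s) * ∫ u in (0 : ℝ)..s, y u) + f t)
    (heqyt : ∀ t ∈ Set.Icc (0 : ℝ) T,
      ytilde t = ytilde 0 + (∫ s in (0 : ℝ)..t, (β / s) * ∫ u in (0 : ℝ)..s, ytilde u) + f t) :
    ∀ t ∈ Set.Icc (0 : ℝ) T, y t = ytilde t := by
  have hdiff : ∀ t ∈ Icc 0 T, (y - ytilde) t = integralOfMean β (y - ytilde) t := by
    intro t ht
    have hsub : Icc 0 t ⊆ Icc 0 T := Icc_subset_Icc_right ht.2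
    rw [integralOfMean_sub β ht.1 (hcy.mono hsub) (hcyt.mono hsub), Pi.sub_apply,
      heqy t ht, heqyt t ht, h0, integralOfMean, integralOfMean]
    ring
  intro t ht
  exact sub_eq_zero.mp (eq_zero_of_eq_integralOfMean (hcy.sub hcyt) hdiff t ht)

/-- For `β > 0`, continuous solutions of
`y(t) = y(0) + ∫_0^t (β/s) ∫_0^s y(u) du ds + f(t)` (with `f` continuous, `f(0) = 0`)
are unique: two continuous solutions with the same initial value coincide on `[0,T]`. -/
theorem integral_equation_unique (β T : ℝ) (hβ : 0 < β) (hT : 0 < T)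
    (f : ℝ → ℝ) (hf : ContinuousOn f (Set.Icc 0 T)) (hf0 : f 0 = 0)
    (y ytilde : ℝ → ℝ)
    (hcy : ContinuousOn y (Set.Icc 0 T)) (hcyt : ContinuousOn ytilde (Set.Icc 0 T))
    (h0 : y 0 = ytilde 0)
    (heqy : ∀ t ∈ Set.Icc (0 : ℝ) T,
      y t = y 0 + (∫ s in (0 : ℝ)..t, (β / s) * ∫ u in (0 : ℝ)..s, y u) + f t)
    (heqyt : ∀ t ∈ Set.Icc (0 : ℝ) T,
      ytilde t = ytilde 0 + (∫ s in (0 : ℝ)..t, (β / s) * ∫ u in (0 : ℝ)..s, ytilde u) + f t) :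
    ∀ t ∈ Set.Icc (0 : ℝ) T, y t = ytilde t :=
  integral_equation_unique_general β T f y ytilde hcy hcyt h0 heqy heqyt
end

section
/- Fix β > 0 and T > 0. The diagonal function t ↦ ψ(t,t,T) = 1/(2√(βt)·[I_0(2√(βT))K_1(2√(βt)) + K_0(2√(βT))I_1(2√(βt))]) is continuous and strictly increasing on (0,T], satisfies ψ(T,T,T) = 1, extends continuously to t = 0 with value 1/I_0(2√(βT)), and satisfies 1/I_0(2√(βT)) ≤ ψ(t,t,T) ≤ 1 for all t ∈ [0,T]. -/
open Real MeasureTheory Set Filter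


/-- Modified Bessel function of the first kind of integer order,
`I_ν(x) = Σ_{k=0}^∞ (x/2)^{2k+ν} / (k! (k+ν)!)`. -/
noncomputable def besselI (ν : ℕ) (x : ℝ) : ℝ :=
  ∑' k : ℕ, (x / 2) ^ (2 * k + ν) / ((Nat.factorial k : ℝ) * (Nat.factorial (k + ν) : ℝ))


lemma factorial_cast_pos (k : ℕ) : (0:ℝ) < (Nat.factorial k : ℝ) := by
  exact_mod_cast Nat.factorial_pos k

lemma one_le_factorial_cast (k : ℕ) : (1:ℝ) ≤ (Nat.factorial k : ℝ) := by
  exact_mod_cast Nat.one_le_iff_ne_zero.mpr (Nat.factorial_ne_zero _)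

lemma abs_pow_besselI (x : ℝ) (k ν : ℕ) :
    (|x|/2) ^ (2*k+ν) = (|x|/2)^ν * ((x/2)^2)^k := by
  have h : (x/2)^2 = (|x|/2)^2 := by rw [div_pow, div_pow, sq_abs]
  rw [h, ← pow_mul, ← pow_add]
  ring_nf

lemma besselI_term_bound (x : ℝ) (k ν : ℕ) :
    ‖(x / 2) ^ (2 * k + ν) / ((Nat.factorial k : ℝ) * (Nat.factorial (k + ν) : ℝ))‖
      ≤ (|x|/2) ^ ν * (((x/2)^2) ^ k / (Nat.factorial k : ℝ)) := by
  have h1 : (0:ℝ) < (Nat.factorial k : ℝ) * (Nat.factorial (k+ν) : ℝ) :=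
    mul_pos (factorial_cast_pos k) (factorial_cast_pos (k+ν))
  rw [norm_div, norm_pow, Real.norm_eq_abs (x/2), Real.norm_eq_abs, abs_of_pos h1, abs_div, abs_two]
  rw [abs_pow_besselI, mul_div_assoc]
  gcongr
  nlinarith [factorial_cast_pos k, one_le_factorial_cast (k+ν)]

lemma summable_besselI (ν : ℕ) (x : ℝ) :
    Summable (fun k : ℕ => (x / 2) ^ (2 * k + ν) / ((Nat.factorial k : ℝ) * (Nat.factorial (k + ν) : ℝ))) := by
  apply Summable.of_norm_bounded (g := fun k : ℕ => (|x|/2) ^ ν * (((x/2)^2) ^ k / (Nat.factorial k : ℝ)))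
  · exact (Real.summable_pow_div_factorial ((x/2)^2)).mul_left _
  · exact fun k => besselI_term_bound x k ν

lemma besselI_term_nonneg (ν k : ℕ) {x : ℝ} (hx : 0 ≤ x) :
    0 ≤ (x / 2) ^ (2 * k + ν) / ((Nat.factorial k : ℝ) * (Nat.factorial (k + ν) : ℝ)) := by
  positivity

lemma besselI_nonneg (ν : ℕ) {x : ℝ} (hx : 0 ≤ x) : 0 ≤ besselI ν x :=
  tsum_nonneg (fun k => besselI_term_nonneg ν k hx)

lemma besselI_zero_zero : besselI 0 0 = 1 := by
  unfold besselI
  rw [tsum_eq_single 0]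
  · norm_num
  · intro k hk
    have h : (0:ℝ)/2 = 0 := by norm_num
    rw [h, zero_pow]
    · simp
    · omega

lemma besselI_one_zero : besselI 1 0 = 0 := by
  unfold besselI
  convert tsum_zero with k
  have h : (0:ℝ)/2 = 0 := by norm_num
  rw [h, zero_pow] <;> simp

lemma one_le_besselI_zero {x : ℝ} (hx : 0 ≤ x) : 1 ≤ besselI 0 x := by
  have := Summable.le_tsum (summable_besselI 0 x) 0 (fun k _ => besselI_term_nonneg 0 k hx)
  simpa [besselI] using this

lemma besselI_zero_pos {x : ℝ} (hx : 0 ≤ x) : 0 < besselI 0 x :=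
  lt_of_lt_of_le one_pos (one_le_besselI_zero hx)

lemma besselI_mono (ν : ℕ) {x y : ℝ} (hx : 0 ≤ x) (hxy : x ≤ y) :
    besselI ν x ≤ besselI ν y := by
  apply Summable.tsum_le_tsum _ (summable_besselI ν x) (summable_besselI ν y)
  intro k
  have hc := mul_pos (factorial_cast_pos k) (factorial_cast_pos (k+ν))
  gcongr

lemma continuous_besselI (ν : ℕ) : Continuous (besselI ν) := by
  rw [continuous_iff_continuousAt]
  intro x
  set R := |x| + 1 with hRdef
  have hmem : x ∈ Metric.ball (0:ℝ) R := by
    simp only [Metric.mem_ball, dist_zero_right, Real.norm_eq_abs, hRdef]; linarith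
  have hcont : ContinuousOn (besselI ν) (Metric.ball 0 R) := by
    unfold besselI
    apply continuousOn_tsum (u := fun k : ℕ => (R/2) ^ ν * (((R/2)^2) ^ k / (Nat.factorial k : ℝ)))
    · intro i; fun_prop
    · exact (Real.summable_pow_div_factorial ((R/2)^2)).mul_left _
    · intro k y hy
      have hyR : |y| ≤ R := by
        rw [Metric.mem_ball, dist_zero_right, Real.norm_eq_abs] at hy; linarith
      refine le_trans (besselI_term_bound y k ν) ?_
      have h : (y/2)^2 = (|y|/2)^2 := by rw [div_pow, div_pow, sq_abs]
      have hR : (0:ℝ) < R := by positivity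
      rw [h]
      gcongr
  exact hcont.continuousAt (Metric.isOpen_ball.mem_nhds hmem)

lemma deriv0_bound (R : ℝ) (hR : 1 ≤ R) (k : ℕ) (y : ℝ) (hy : |y| ≤ R) :
    ‖(k:ℝ) * (y/2)^(2*k-1) / ((Nat.factorial k:ℝ) * (Nat.factorial k:ℝ))‖
      ≤ (2/R) * ((R^2/2)^k / (Nat.factorial k:ℝ)) := by
  have hR0 : (0:ℝ) < R := by linarith
  have hfac := factorial_cast_pos k
  have hfac1 := one_le_factorial_cast k
  have hk2 : (k:ℝ) ≤ 2^k := by exact_mod_cast Nat.le_of_lt (Nat.lt_two_pow_self (n := k))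
  have h1 : ‖(k:ℝ) * (y/2)^(2*k-1) / ((Nat.factorial k:ℝ) * (Nat.factorial k:ℝ))‖
      = (k:ℝ) * |y/2|^(2*k-1) / ((Nat.factorial k:ℝ) * (Nat.factorial k:ℝ)) := by
    rw [norm_div, norm_mul, norm_pow, Real.norm_eq_abs, Real.norm_eq_abs, Real.norm_eq_abs,
      Nat.abs_cast, abs_of_pos (mul_pos hfac hfac)]
  rw [h1]
  have habs : |y/2| ≤ R/2 := by rw [abs_div, abs_two]; gcongr
  have habs0 : (0:ℝ) ≤ |y/2| := abs_nonneg _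
  have step1 : (k:ℝ) * |y/2|^(2*k-1) / ((Nat.factorial k:ℝ) * (Nat.factorial k:ℝ))
      ≤ (k:ℝ) * (R/2)^(2*k-1) / ((Nat.factorial k:ℝ) * (Nat.factorial k:ℝ)) := by
    gcongr
  refine le_trans step1 ?_
  have hkey : (R^2/2)^k = 2^k * (R/2)^(2*k) := by
    rw [pow_mul, ← mul_pow]; congr 1; ring
  rcases Nat.eq_zero_or_pos k with h0 | hkpos
  · subst h0; simp; positivity
  · have hsucc : (R/2)^(2*k) = (R/2)^(2*k-1) * (R/2) := by
      rw [← pow_succ]; congr 1; omega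
    have hrhs : (2:ℝ)/R * ((2^k * ((R/2)^(2*k-1) * (R/2))) / (Nat.factorial k:ℝ))
        = 2^k * (R/2)^(2*k-1) / (Nat.factorial k:ℝ) := by
      field_simp
    rw [hkey, hsucc, hrhs, div_le_div_iff₀ (by positivity) hfac]
    have hp : (0:ℝ) ≤ (R/2)^(2*k-1) := by positivity
    nlinarith [mul_nonneg (mul_nonneg hp (le_of_lt hfac)) (sub_nonneg.mpr hk2),
      mul_nonneg (mul_nonneg (by positivity : (0:ℝ) ≤ (2:ℝ)^k) hp)
        (mul_nonneg (le_of_lt hfac) (sub_nonneg.mpr hfac1))]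

lemma hasDerivAt_besselI_zero (x : ℝ) : HasDerivAt (besselI 0) (besselI 1 x) x := by
  set R := |x| + 1 with hRdef
  have hR1 : (1:ℝ) ≤ R := by rw [hRdef]; linarith [abs_nonneg x]
  have hR0 : (0:ℝ) < R := by linarith
  have hx : x ∈ Metric.ball (0:ℝ) R := by
    simp only [Metric.mem_ball, dist_zero_right, Real.norm_eq_abs, hRdef]; linarith
  have hsum' : ∀ y : ℝ, Summable (fun k : ℕ => (k:ℝ) * (y/2)^(2*k-1) / ((Nat.factorial k:ℝ) * (Nat.factorial k:ℝ))) := by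
    intro y
    apply Summable.of_norm_bounded
      (g := fun k : ℕ => (2/(|y|+1)) * (((|y|+1)^2/2)^k / (Nat.factorial k:ℝ)))
      ((Real.summable_pow_div_factorial _).mul_left _)
    intro k
    exact deriv0_bound (|y|+1) (by linarith [abs_nonneg y]) k y (by linarith [abs_nonneg y])
  have main : HasDerivAt (fun y => ∑' k : ℕ, (y/2)^(2*k+0)/((Nat.factorial k:ℝ) * (Nat.factorial (k+0):ℝ)))
      (∑' k : ℕ, (k:ℝ) * (x/2)^(2*k-1) / ((Nat.factorial k:ℝ) * (Nat.factorial k:ℝ))) x := by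
    apply hasDerivAt_tsum_of_isPreconnected
      (u := fun k : ℕ => (2/R) * ((R^2/2)^k / (Nat.factorial k:ℝ)))
      ((Real.summable_pow_div_factorial _).mul_left _)
      Metric.isOpen_ball (convex_ball 0 R).isPreconnected ?_ ?_ hx ?_ hx
    · intro k y hy
      have h1 : HasDerivAt (fun y : ℝ => (y/2)^(2*k)) ((2*k : ℕ) * (y/2)^(2*k-1) * (1/2)) y :=
        ((hasDerivAt_id y).div_const 2).pow _
      have h2 := h1.div_const ((Nat.factorial k:ℝ) * (Nat.factorial (k+0):ℝ))
      refine h2.congr_deriv (Eq.symm ?_)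
      push_cast [Nat.add_zero]
      ring
    · intro k y hy
      have hyR : |y| ≤ R := by
        rw [Metric.mem_ball, dist_zero_right, Real.norm_eq_abs] at hy; linarith
      exact deriv0_bound R hR1 k y hyR
    · exact summable_besselI 0 x
  have hval : (∑' k : ℕ, (k:ℝ) * (x/2)^(2*k-1) / ((Nat.factorial k:ℝ) * (Nat.factorial k:ℝ)))
      = besselI 1 x := by
    rw [Summable.tsum_eq_zero_add (hsum' x)]
    simp only [Nat.cast_zero, zero_mul, zero_div, zero_add]
    unfold besselI
    congr 1; funext j
    have he : 2*(j+1)-1 = 2*j+1 := by omega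
    rw [he, Nat.factorial_succ]
    push_cast
    field_simp
  rw [← hval]
  exact main

lemma hasDerivAt_id_mul_besselI_one (x : ℝ) :
    HasDerivAt (fun y => y * besselI 1 y) (x * besselI 0 x) x := by
  set R := |x| + 1 with hRdef
  have hR1 : (1:ℝ) ≤ R := by rw [hRdef]; linarith [abs_nonneg x]
  have hR0 : (0:ℝ) < R := by linarith
  have hx : x ∈ Metric.ball (0:ℝ) R := by
    simp only [Metric.mem_ball, dist_zero_right, Real.norm_eq_abs, hRdef]; linarith
  have bound : ∀ (S : ℝ), 1 ≤ S → ∀ (k : ℕ) (y : ℝ), |y| ≤ S →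
      ‖(2*(k:ℝ)+2) * (y/2)^(2*k+1) / ((Nat.factorial k:ℝ) * (Nat.factorial (k+1):ℝ))‖
        ≤ S * ((S^2/4)^k / (Nat.factorial k:ℝ)) := by
    intro S hS1 k y hyS
    have hS0 : (0:ℝ) < S := by linarith
    have hfac := factorial_cast_pos k
    have hfac1 := one_le_factorial_cast k
    have h1 : ‖(2*(k:ℝ)+2) * (y/2)^(2*k+1) / ((Nat.factorial k:ℝ) * (Nat.factorial (k+1):ℝ))‖
        = (2*(k:ℝ)+2) * |y/2|^(2*k+1) / ((Nat.factorial k:ℝ) * (Nat.factorial (k+1):ℝ)) := by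
      rw [norm_div, norm_mul, norm_pow, Real.norm_eq_abs, Real.norm_eq_abs, Real.norm_eq_abs,
        abs_of_pos (by positivity : (0:ℝ) < 2*(k:ℝ)+2),
        abs_of_pos (mul_pos (factorial_cast_pos k) (factorial_cast_pos (k+1)))]
    rw [h1]
    have habs : |y/2| ≤ S/2 := by rw [abs_div, abs_two]; gcongr
    have habs0 : (0:ℝ) ≤ |y/2| := abs_nonneg _
    have step1 : (2*(k:ℝ)+2) * |y/2|^(2*k+1) / ((Nat.factorial k:ℝ) * (Nat.factorial (k+1):ℝ))
        ≤ (2*(k:ℝ)+2) * (S/2)^(2*k+1) / ((Nat.factorial k:ℝ) * (Nat.factorial (k+1):ℝ)) := by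
      gcongr
    refine le_trans step1 ?_
    have hfs : (Nat.factorial (k+1) : ℝ) = ((k:ℝ)+1) * (Nat.factorial k:ℝ) := by
      rw [Nat.factorial_succ]; push_cast; ring
    have heq : (2*(k:ℝ)+2) * (S/2)^(2*k+1) / ((Nat.factorial k:ℝ) * (Nat.factorial (k+1):ℝ))
        = 2 * (S/2)^(2*k+1) / ((Nat.factorial k:ℝ) * (Nat.factorial k:ℝ)) := by
      rw [hfs]; field_simp
    rw [heq]
    have hpow : (S/2)^(2*k+1) = (S/2) * (S^2/4)^k := by
      rw [pow_succ', pow_mul]; congr 2; ring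
    rw [hpow]
    have h2 : 2 * ((S/2) * (S^2/4)^k) = S * (S^2/4)^k := by ring
    rw [h2, mul_div_assoc]
    gcongr
    nlinarith [hfac, hfac1]
  have main : HasDerivAt (fun y => ∑' k : ℕ, 2 * (y/2)^(2*k+2) / ((Nat.factorial k:ℝ) * (Nat.factorial (k+1):ℝ)))
      (∑' k : ℕ, (2*(k:ℝ)+2) * (x/2)^(2*k+1) / ((Nat.factorial k:ℝ) * (Nat.factorial (k+1):ℝ))) x := by
    apply hasDerivAt_tsum_of_isPreconnected
      (u := fun k : ℕ => R * ((R^2/4)^k / (Nat.factorial k:ℝ)))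
      ((Real.summable_pow_div_factorial _).mul_left _)
      Metric.isOpen_ball (convex_ball 0 R).isPreconnected ?_ ?_ hx ?_ hx
    · intro k y hy
      have h1 : HasDerivAt (fun y : ℝ => (y/2)^(2*k+2)) ((2*k+2 : ℕ) * (y/2)^(2*k+2-1) * (1/2)) y :=
        ((hasDerivAt_id y).div_const 2).pow _
      have h2 := (h1.const_mul 2).div_const ((Nat.factorial k:ℝ) * (Nat.factorial (k+1):ℝ))
      refine h2.congr_deriv (Eq.symm ?_)
      have he : 2*k+2-1 = 2*k+1 := by omega
      rw [he]; push_cast; ring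
    · intro k y hy
      have hyR : |y| ≤ R := by
        rw [Metric.mem_ball, dist_zero_right, Real.norm_eq_abs] at hy; linarith
      exact bound R hR1 k y hyR
    · have heq : (fun k : ℕ => 2 * (x/2)^(2*k+2) / ((Nat.factorial k:ℝ) * (Nat.factorial (k+1):ℝ)))
          = fun k : ℕ => x * ((x/2)^(2*k+1) / ((Nat.factorial k:ℝ) * (Nat.factorial (k+1):ℝ))) := by
        funext k; rw [pow_succ]; ring
      rw [heq]
      exact (summable_besselI 1 x).mul_left x
  have hfun : (fun y => ∑' k : ℕ, 2 * (y/2)^(2*k+2) / ((Nat.factorial k:ℝ) * (Nat.factorial (k+1):ℝ)))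
      = fun y => y * besselI 1 y := by
    funext y
    unfold besselI
    rw [← tsum_mul_left]
    congr 1; funext k
    rw [pow_succ]; ring
  have hval : (∑' k : ℕ, (2*(k:ℝ)+2) * (x/2)^(2*k+1) / ((Nat.factorial k:ℝ) * (Nat.factorial (k+1):ℝ)))
      = x * besselI 0 x := by
    unfold besselI
    rw [← tsum_mul_left]
    congr 1; funext k
    simp only [Nat.add_zero]
    rw [Nat.factorial_succ, pow_succ]
    push_cast
    field_simp
  rw [← hfun, ← hval]
  exact main

/-- Modified Bessel function of the second kind of integer order, via the
standard integral representation `K_ν(x) = ∫_0^∞ e^{-x cosh t} cosh(ν t) dt`. -/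
noncomputable def besselK (ν : ℕ) (x : ℝ) : ℝ :=
  ∫ t in Set.Ioi (0 : ℝ), Real.exp (-x * Real.cosh t) * Real.cosh ((ν : ℝ) * t)

/-- The kernel `ψ(s,t,T)` appearing in the explicit solution of the time-delayed BSDE. -/
noncomputable def psiKer (β s t T : ℝ) : ℝ :=
  (besselI 0 (2 * Real.sqrt (β * t)) * besselK 1 (2 * Real.sqrt (β * s)) +
    besselK 0 (2 * Real.sqrt (β * t)) * besselI 1 (2 * Real.sqrt (β * s))) /
  (besselI 0 (2 * Real.sqrt (β * T)) * besselK 1 (2 * Real.sqrt (β * s)) +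
    besselK 0 (2 * Real.sqrt (β * T)) * besselI 1 (2 * Real.sqrt (β * s)))


noncomputable def besselJ (n : ℕ) (x : ℝ) : ℝ :=
  ∫ t in Set.Ioi (0 : ℝ), (Real.cosh t) ^ n * Real.exp (-x * Real.cosh t)

lemma cosh_le_exp_self {t : ℝ} (ht : 0 ≤ t) : Real.cosh t ≤ Real.exp t := by
  rw [Real.cosh_eq]
  have h1 : Real.exp (-t) ≤ Real.exp t := Real.exp_le_exp.mpr (by linarith)
  linarith

lemma sq_div_eight_le_cosh {t : ℝ} (ht : 0 ≤ t) : t^2/8 ≤ Real.cosh t := by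
  rw [Real.cosh_eq]
  have h1 := Real.add_one_le_exp (t/2)
  have h2 : Real.exp t = Real.exp (t/2) * Real.exp (t/2) := by
    rw [← Real.exp_add]; ring_nf
  have h3 : (0:ℝ) < Real.exp (-t) := Real.exp_pos _
  nlinarith

lemma lin_sub_cosh_bound {x : ℝ} (hx : 0 < x) {c : ℝ} (hc : 0 ≤ c) {t : ℝ} (ht : 0 ≤ t) :
    c*t - x*Real.cosh t ≤ 2*(c+1)^2/x - t := by
  have h1 := sq_div_eight_le_cosh ht
  have h2 : x * (t^2/8) ≤ x * Real.cosh t := by gcongr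
  have h3 : 2*(c+1)^2/x * x = 2*(c+1)^2 := by field_simp
  nlinarith [sq_nonneg (x*t - 4*(c+1)), sq_nonneg (x*t), mul_pos hx hx]

lemma integrableOn_exp_lin_cosh {x : ℝ} (hx : 0 < x) {c : ℝ} (hc : 0 ≤ c) :
    IntegrableOn (fun t => Real.exp (c*t - x*Real.cosh t)) (Ioi (0:ℝ)) := by
  apply Integrable.mono'
    (g := fun t => Real.exp (2*(c+1)^2/x) * Real.exp (-1*t))
    ((exp_neg_integrableOn_Ioi 0 one_pos).const_mul _)
  · exact (Continuous.aestronglyMeasurable (by fun_prop))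
  · filter_upwards [self_mem_ae_restrict measurableSet_Ioi] with t ht
    rw [Real.norm_eq_abs, abs_of_pos (Real.exp_pos _), ← Real.exp_add]
    apply Real.exp_le_exp.mpr
    have := lin_sub_cosh_bound hx hc (le_of_lt ht)
    linarith

lemma cosh_pow_le_exp {t : ℝ} (ht : 0 ≤ t) (n : ℕ) : Real.cosh t ^ n ≤ Real.exp ((n:ℝ)*t) := by
  calc Real.cosh t ^ n ≤ (Real.exp t) ^ n := by
        gcongr
        exact cosh_le_exp_self ht
    _ = Real.exp ((n:ℝ)*t) := by rw [← Real.exp_nat_mul]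

lemma abs_sinh_le_cosh (t : ℝ) : |Real.sinh t| ≤ Real.cosh t := by
  rw [abs_le]
  constructor
  · nlinarith [Real.cosh_eq t, Real.sinh_eq t, Real.exp_pos (-t), Real.exp_pos t]
  · nlinarith [Real.cosh_eq t, Real.sinh_eq t, Real.exp_pos (-t), Real.exp_pos t]

lemma integrableOn_cosh_pow_exp {x : ℝ} (hx : 0 < x) (n : ℕ) :
    IntegrableOn (fun t => Real.cosh t ^ n * Real.exp (-x*Real.cosh t)) (Ioi (0:ℝ)) := by
  apply Integrable.mono' (g := fun t => Real.exp ((n:ℝ)*t - x*Real.cosh t))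
    (integrableOn_exp_lin_cosh hx (Nat.cast_nonneg n))
  · exact Continuous.aestronglyMeasurable (by fun_prop)
  · filter_upwards [self_mem_ae_restrict measurableSet_Ioi] with t ht
    rw [Real.norm_eq_abs, abs_of_pos (by positivity : (0:ℝ) < Real.cosh t ^ n * Real.exp (-x*Real.cosh t))]
    have hsplit : Real.exp ((n:ℝ)*t - x*Real.cosh t)
        = Real.exp ((n:ℝ)*t) * Real.exp (-x*Real.cosh t) := by
      rw [← Real.exp_add]; ring_nf
    rw [hsplit]
    gcongr
    exact cosh_pow_le_exp (le_of_lt ht) n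

lemma integrableOn_abs_sinh_kernel {x : ℝ} (hx : 0 < x) (g : ℝ → ℝ)
    (hg : Continuous g) (hbound : ∀ t, |g t| ≤ Real.cosh t ^ 2) :
    IntegrableOn (fun t => g t * Real.exp (-x*Real.cosh t)) (Ioi (0:ℝ)) := by
  apply Integrable.mono' (g := fun t => Real.cosh t ^ 2 * Real.exp (-x*Real.cosh t))
    (integrableOn_cosh_pow_exp hx 2)
  · exact Continuous.aestronglyMeasurable (by fun_prop)
  · filter_upwards [] with t
    rw [norm_mul, Real.norm_eq_abs, Real.norm_eq_abs, abs_of_pos (Real.exp_pos _)]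
    gcongr
    exact hbound t

lemma besselJ_pos {x : ℝ} (hx : 0 < x) (n : ℕ) : 0 < besselJ n x := by
  unfold besselJ
  rw [setIntegral_pos_iff_support_of_nonneg_ae]
  · have hsupp : Function.support (fun t => Real.cosh t ^ n * Real.exp (-x*Real.cosh t)) = univ := by
      ext t; simp only [Function.mem_support, mem_univ, iff_true]
      positivity
    rw [hsupp, univ_inter, Real.volume_Ioi]
    exact ENNReal.zero_lt_top
  · filter_upwards [] with t
    positivity
  · exact integrableOn_cosh_pow_exp hx n

lemma besselK_zero_eq (x : ℝ) : besselK 0 x = besselJ 0 x := by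
  unfold besselK besselJ
  congr 1; funext t
  simp

lemma besselK_one_eq (x : ℝ) : besselK 1 x = besselJ 1 x := by
  unfold besselK besselJ
  congr 1; funext t
  simp [mul_comm]

lemma hasDerivAt_besselJ {x : ℝ} (hx : 0 < x) (n : ℕ) :
    HasDerivAt (besselJ n) (-(besselJ (n+1) x)) x := by
  have key := hasDerivAt_integral_of_dominated_loc_of_deriv_le
    (μ := volume.restrict (Ioi (0:ℝ))) (𝕜 := ℝ)
    (F := fun y t => Real.cosh t ^ n * Real.exp (-y*Real.cosh t))
    (F' := fun y t => -(Real.cosh t ^ (n+1) * Real.exp (-y*Real.cosh t)))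
    (x₀ := x) (s := Metric.ball x (x/2)) (Metric.ball_mem_nhds x (by positivity))
    (bound := fun t => Real.cosh t ^ (n+1) * Real.exp (-(x/2)*Real.cosh t))
    ?_ ?_ ?_ ?_ ?_ ?_
  · obtain ⟨-, h⟩ := key
    have : (∫ t in Ioi (0:ℝ), -(Real.cosh t ^ (n+1) * Real.exp (-x*Real.cosh t)))
        = -(besselJ (n+1) x) := by
      rw [integral_neg]; rfl
    rw [this] at h
    exact h
  · filter_upwards [] with y
    exact Continuous.aestronglyMeasurable (by fun_prop)
  · exact integrableOn_cosh_pow_exp hx n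
  · exact Continuous.aestronglyMeasurable (by fun_prop)
  · filter_upwards [] with t
    intro y hy
    have hy2 : x/2 ≤ y := by
      rw [Metric.mem_ball, Real.dist_eq, abs_lt] at hy; linarith
    rw [norm_neg, norm_mul, Real.norm_eq_abs, Real.norm_eq_abs,
      abs_of_pos (by positivity : (0:ℝ) < Real.cosh t ^ (n+1)), abs_of_pos (Real.exp_pos _)]
    have : Real.exp (-y*Real.cosh t) ≤ Real.exp (-(x/2)*Real.cosh t) := by
      rw [Real.exp_le_exp]
      nlinarith [Real.cosh_pos t]
    gcongr
  · exact integrableOn_cosh_pow_exp (by positivity) (n+1)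
  · filter_upwards [] with t
    intro y hy
    have h1 : HasDerivAt (fun y : ℝ => -y*Real.cosh t) (-Real.cosh t) y := by
      simpa using ((hasDerivAt_id y).neg.mul_const (Real.cosh t))
    have h2 := (h1.exp).const_mul (Real.cosh t ^ n)
    refine h2.congr_deriv (Eq.symm ?_)
    rw [pow_succ]
    try ring

lemma tendsto_exp_lin_cosh {x : ℝ} (hx : 0 < x) {c : ℝ} (hc : 0 ≤ c) :
    Tendsto (fun t => Real.exp (c*t - x*Real.cosh t)) atTop (nhds 0) := by
  apply squeeze_zero' (g := fun t => Real.exp (2*(c+1)^2/x) * Real.exp (-t))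
  · filter_upwards [] with t
    positivity
  · filter_upwards [eventually_ge_atTop (0:ℝ)] with t ht
    rw [← Real.exp_add]
    apply Real.exp_le_exp.mpr
    have := lin_sub_cosh_bound hx hc ht
    linarith
  · rw [← mul_zero (Real.exp (2*(c+1)^2/x))]
    exact (Real.tendsto_exp_atBot.comp tendsto_neg_atTop_atBot).const_mul _

lemma tendsto_sinh_mul_exp {x : ℝ} (hx : 0 < x) :
    Tendsto (fun t => Real.sinh t * Real.exp (-x*Real.cosh t)) atTop (nhds 0) := by
  apply squeeze_zero_norm' (a := fun t => Real.exp (1*t - x*Real.cosh t))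
  · filter_upwards [eventually_ge_atTop (0:ℝ)] with t ht
    rw [norm_mul, Real.norm_eq_abs, Real.norm_eq_abs, abs_of_pos (Real.exp_pos _)]
    have h1 : |Real.sinh t| ≤ Real.cosh t := abs_sinh_le_cosh t
    have h2 : Real.cosh t ≤ Real.exp t := cosh_le_exp_self ht
    have hsplit : Real.exp (1*t - x*Real.cosh t)
        = Real.exp t * Real.exp (-x*Real.cosh t) := by
      rw [← Real.exp_add]; ring_nf
    rw [hsplit]
    gcongr
    linarith
  · exact tendsto_exp_lin_cosh hx zero_le_one

lemma tendsto_exp_neg_cosh {x : ℝ} (hx : 0 < x) :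
    Tendsto (fun t => Real.exp (-x*Real.cosh t)) atTop (nhds 0) := by
  apply squeeze_zero_norm' (a := fun t => Real.exp (0*t - x*Real.cosh t))
  · filter_upwards [] with t
    rw [Real.norm_eq_abs, abs_of_pos (Real.exp_pos _), zero_mul, zero_sub]
    simp [neg_mul]
  · exact tendsto_exp_lin_cosh hx (le_refl 0)

lemma integral_sinh_exp {x : ℝ} (hx : 0 < x) :
    ∫ t in Ioi (0:ℝ), Real.sinh t * Real.exp (-x*Real.cosh t) = Real.exp (-x) / x := by
  have hderiv : ∀ t ∈ Ioi (0:ℝ),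
      HasDerivAt (fun t => -Real.exp (-x*Real.cosh t) / x)
        (Real.sinh t * Real.exp (-x*Real.cosh t)) t := by
    intro t _
    have h1 : HasDerivAt (fun t : ℝ => -x*Real.cosh t) (-x*Real.sinh t) t :=
      (Real.hasDerivAt_cosh t).const_mul (-x)
    have h2 := ((h1.exp).neg).div_const x
    refine h2.congr_deriv (Eq.symm ?_)
    field_simp
  have hint : IntegrableOn (fun t => Real.sinh t * Real.exp (-x*Real.cosh t)) (Ioi (0:ℝ)) := by
    apply integrableOn_abs_sinh_kernel hx _ Real.continuous_sinh
    intro t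
    calc |Real.sinh t| ≤ Real.cosh t := abs_sinh_le_cosh t
      _ ≤ Real.cosh t ^ 2 := by nlinarith [Real.cosh_pos t, Real.one_le_cosh t]
  have htend : Tendsto (fun t => -Real.exp (-x*Real.cosh t) / x) atTop (nhds 0) := by
    have := ((tendsto_exp_neg_cosh hx).neg).div_const x
    simpa using this
  have h0 : ContinuousWithinAt (fun t => -Real.exp (-x*Real.cosh t) / x) (Ici (0:ℝ)) 0 :=
    (Continuous.continuousAt (by fun_prop)).continuousWithinAt
  have := integral_Ioi_of_hasDerivAt_of_tendsto h0 hderiv hint htend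
  rw [this]
  simp [Real.cosh_zero]
  ring

lemma besselJ_one_eq {x : ℝ} (hx : 0 < x) :
    besselJ 1 x = x * (besselJ 2 x - besselJ 0 x) := by
  have hderiv : ∀ t ∈ Ioi (0:ℝ),
      HasDerivAt (fun t => Real.sinh t * Real.exp (-x*Real.cosh t))
        (Real.cosh t * Real.exp (-x*Real.cosh t)
          - x * (Real.sinh t ^ 2 * Real.exp (-x*Real.cosh t))) t := by
    intro t _
    have h1 : HasDerivAt (fun t : ℝ => -x*Real.cosh t) (-x*Real.sinh t) t :=
      (Real.hasDerivAt_cosh t).const_mul (-x)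
    have h2 := (Real.hasDerivAt_sinh t).mul (h1.exp)
    refine h2.congr_deriv (Eq.symm ?_)
    ring
  have hint1 := integrableOn_cosh_pow_exp hx 1
  have hintsq : IntegrableOn (fun t => Real.sinh t ^ 2 * Real.exp (-x*Real.cosh t)) (Ioi (0:ℝ)) := by
    apply integrableOn_abs_sinh_kernel hx _ (by fun_prop)
    intro t
    rw [abs_of_nonneg (sq_nonneg _)]
    nlinarith [abs_sinh_le_cosh t, abs_nonneg (Real.sinh t), sq_abs (Real.sinh t)]
  have hint : IntegrableOn (fun t => Real.cosh t * Real.exp (-x*Real.cosh t)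
      - x * (Real.sinh t ^ 2 * Real.exp (-x*Real.cosh t))) (Ioi (0:ℝ)) := by
    apply Integrable.sub
    · simpa [IntegrableOn] using hint1
    · exact hintsq.const_mul x
  have h0 : ContinuousWithinAt (fun t => Real.sinh t * Real.exp (-x*Real.cosh t)) (Ici (0:ℝ)) 0 :=
    (Continuous.continuousAt (by fun_prop)).continuousWithinAt
  have hmain := integral_Ioi_of_hasDerivAt_of_tendsto h0 hderiv hint (tendsto_sinh_mul_exp hx)
  rw [Real.sinh_zero, zero_mul, sub_zero] at hmain
  have hsplit : ∫ t in Ioi (0:ℝ), (Real.cosh t * Real.exp (-x*Real.cosh t)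
      - x * (Real.sinh t ^ 2 * Real.exp (-x*Real.cosh t)))
      = besselJ 1 x - x * ∫ t in Ioi (0:ℝ), Real.sinh t ^ 2 * Real.exp (-x*Real.cosh t) := by
    rw [integral_sub (by simpa [IntegrableOn] using hint1) (hintsq.const_mul x), MeasureTheory.integral_const_mul]
    congr 1
    unfold besselJ
    congr 1; funext t; rw [pow_one]
  have hsq : ∫ t in Ioi (0:ℝ), Real.sinh t ^ 2 * Real.exp (-x*Real.cosh t)
      = besselJ 2 x - besselJ 0 x := by
    have heq : ∀ t : ℝ, Real.sinh t ^ 2 * Real.exp (-x*Real.cosh t)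
        = Real.cosh t ^ 2 * Real.exp (-x*Real.cosh t) - Real.cosh t ^ 0 * Real.exp (-x*Real.cosh t) := by
      intro t
      rw [Real.sinh_sq]
      ring
    calc ∫ t in Ioi (0:ℝ), Real.sinh t ^ 2 * Real.exp (-x*Real.cosh t)
        = ∫ t in Ioi (0:ℝ), (Real.cosh t ^ 2 * Real.exp (-x*Real.cosh t)
            - Real.cosh t ^ 0 * Real.exp (-x*Real.cosh t)) := by
          congr 1; funext t; exact heq t
      _ = besselJ 2 x - besselJ 0 x :=
          integral_sub (integrableOn_cosh_pow_exp hx 2) (integrableOn_cosh_pow_exp hx 0)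
  rw [hsplit, hsq] at hmain
  linarith

lemma besselJ_zero_le_one {x : ℝ} (hx : 0 < x) : besselJ 0 x ≤ besselJ 1 x := by
  unfold besselJ
  apply setIntegral_mono_on (integrableOn_cosh_pow_exp hx 0) (integrableOn_cosh_pow_exp hx 1)
    measurableSet_Ioi
  intro t _
  simp only [pow_zero, pow_one, one_mul]
  nlinarith [Real.one_le_cosh t, Real.exp_pos (-x*Real.cosh t)]

lemma xJ1_lower {x : ℝ} (hx : 0 < x) : Real.exp (-x) ≤ x * besselJ 1 x := by
  have h1 : ∫ t in Ioi (0:ℝ), Real.sinh t * Real.exp (-x*Real.cosh t)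
      ≤ besselJ 1 x := by
    unfold besselJ
    apply setIntegral_mono_on _ (integrableOn_cosh_pow_exp hx 1) measurableSet_Ioi
    · intro t _
      rw [pow_one]
      have h := le_trans (le_abs_self _) (abs_sinh_le_cosh t)
      nlinarith [Real.exp_pos (-x*Real.cosh t)]
    · apply integrableOn_abs_sinh_kernel hx _ Real.continuous_sinh
      intro t
      calc |Real.sinh t| ≤ Real.cosh t := abs_sinh_le_cosh t
        _ ≤ Real.cosh t ^ 2 := by nlinarith [Real.cosh_pos t, Real.one_le_cosh t]
  have h2 := integral_sinh_exp hx
  calc Real.exp (-x) = x * (Real.exp (-x) / x) := by field_simp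
    _ = x * ∫ t in Ioi (0:ℝ), Real.sinh t * Real.exp (-x*Real.cosh t) := by rw [h2]
    _ ≤ x * besselJ 1 x := by gcongr

lemma xJ1_upper {x : ℝ} (hx : 0 < x) : x * besselJ 1 x ≤ Real.exp (-x) + x := by
  have hsinh_int : IntegrableOn (fun t => Real.sinh t * Real.exp (-x*Real.cosh t)) (Ioi (0:ℝ)) := by
    apply integrableOn_abs_sinh_kernel hx _ Real.continuous_sinh
    intro t
    calc |Real.sinh t| ≤ Real.cosh t := abs_sinh_le_cosh t
      _ ≤ Real.cosh t ^ 2 := by nlinarith [Real.cosh_pos t, Real.one_le_cosh t]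
  have hdiff : besselJ 1 x - (∫ t in Ioi (0:ℝ), Real.sinh t * Real.exp (-x*Real.cosh t))
      = ∫ t in Ioi (0:ℝ), (Real.cosh t - Real.sinh t) * Real.exp (-x*Real.cosh t) := by
    unfold besselJ
    rw [← integral_sub (by simpa [IntegrableOn] using integrableOn_cosh_pow_exp hx 1) hsinh_int]
    congr 1; funext t; rw [pow_one]; ring
  have hbound : ∫ t in Ioi (0:ℝ), (Real.cosh t - Real.sinh t) * Real.exp (-x*Real.cosh t)
      ≤ ∫ t in Ioi (0:ℝ), Real.exp (-t) := by
    apply setIntegral_mono_on _ _ measurableSet_Ioi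
    · intro t _
      have h1 : Real.cosh t - Real.sinh t = Real.exp (-t) := by
        rw [Real.cosh_eq, Real.sinh_eq]; ring
      rw [h1]
      have h2 : Real.exp (-x*Real.cosh t) ≤ 1 := by
        rw [← Real.exp_zero]
        apply Real.exp_le_exp.mpr
        nlinarith [Real.cosh_pos t]
      nlinarith [Real.exp_pos (-t)]
    · have heq : (fun t => (Real.cosh t - Real.sinh t) * Real.exp (-x*Real.cosh t))
          = fun t => Real.cosh t ^ 1 * Real.exp (-x*Real.cosh t)
              - Real.sinh t * Real.exp (-x*Real.cosh t) := by
        funext t; rw [pow_one]; ring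
      rw [heq]
      exact (integrableOn_cosh_pow_exp hx 1).sub hsinh_int
    · simpa using exp_neg_integrableOn_Ioi 0 one_pos
  have hexp : ∫ t in Ioi (0:ℝ), Real.exp (-t) = 1 := by
    simpa using integral_exp_neg_Ioi_zero
  have h2 := integral_sinh_exp hx
  have hx' : x * (besselJ 1 x - Real.exp (-x)/x) ≤ x * 1 := by
    calc x * (besselJ 1 x - Real.exp (-x)/x)
        = x * (besselJ 1 x - ∫ t in Ioi (0:ℝ), Real.sinh t * Real.exp (-x*Real.cosh t)) := by rw [h2]
      _ ≤ x * 1 := by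
          apply mul_le_mul_of_nonneg_left _ hx.le
          rw [hdiff, ← hexp]
          exact hbound
  have : x * besselJ 1 x - Real.exp (-x) ≤ x := by
    have hxe : x * (Real.exp (-x)/x) = Real.exp (-x) := by field_simp
    nlinarith
  linarith

lemma tendsto_xJ1 : Tendsto (fun x => x * besselJ 1 x) (nhdsWithin 0 (Ioi 0)) (nhds 1) := by
  have hlow : Tendsto (fun x : ℝ => Real.exp (-x)) (nhdsWithin 0 (Ioi 0)) (nhds 1) := by
    have : Tendsto (fun x : ℝ => Real.exp (-x)) (nhds 0) (nhds 1) := by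
      have := (Real.continuous_exp.comp continuous_neg).tendsto 0
      simpa [Function.comp_def] using this
    exact this.mono_left nhdsWithin_le_nhds
  have hup : Tendsto (fun x : ℝ => Real.exp (-x) + x) (nhdsWithin 0 (Ioi 0)) (nhds 1) := by
    have : Tendsto (fun x : ℝ => Real.exp (-x) + x) (nhds 0) (nhds 1) := by
      have h1 : Tendsto (fun x : ℝ => Real.exp (-x)) (nhds 0) (nhds 1) := by
        have := (Real.continuous_exp.comp continuous_neg).tendsto 0
        simpa [Function.comp_def] using this
      simpa using h1.add (continuous_id.tendsto (0:ℝ))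
    exact this.mono_left nhdsWithin_le_nhds
  apply tendsto_of_tendsto_of_tendsto_of_le_of_le' hlow hup
  · filter_upwards [self_mem_nhdsWithin] with x hx
    exact xJ1_lower hx
  · filter_upwards [self_mem_nhdsWithin] with x hx
    exact xJ1_upper hx

lemma continuousAt_besselJ {x : ℝ} (hx : 0 < x) (n : ℕ) : ContinuousAt (besselJ n) x :=
  (hasDerivAt_besselJ hx n).continuousAt

lemma strictAntiOn_besselJ_zero : StrictAntiOn (besselJ 0) (Ioi (0:ℝ)) := by
  apply strictAntiOn_of_deriv_neg (convex_Ioi 0)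
  · intro z hz
    exact (continuousAt_besselJ hz 0).continuousWithinAt
  · intro z hz
    rw [interior_Ioi] at hz
    rw [(hasDerivAt_besselJ hz 0).deriv]
    simpa using besselJ_pos hz 1

lemma hasDerivAt_id_mul_besselJ_one {x : ℝ} (hx : 0 < x) :
    HasDerivAt (fun y => y * besselJ 1 y) (-(x * besselJ 0 x)) x := by
  have h := (hasDerivAt_id x).mul (hasDerivAt_besselJ hx 1)
  refine h.congr_deriv (Eq.symm ?_)
  simp only [id_eq]
  linear_combination -besselJ_one_eq hx

noncomputable def besselW (y : ℝ) : ℝ :=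
  besselI 0 y * (y * besselJ 1 y) + (y * besselI 1 y) * besselJ 0 y

lemma hasDerivAt_besselW {y : ℝ} (hy : 0 < y) : HasDerivAt besselW 0 y := by
  have h := ((hasDerivAt_besselI_zero y).mul (hasDerivAt_id_mul_besselJ_one hy)).add
    ((hasDerivAt_id_mul_besselI_one y).mul (hasDerivAt_besselJ hy 0))
  refine h.congr_deriv (Eq.symm ?_)
  ring

lemma besselW_const {u v : ℝ} (hu : 0 < u) (huv : u ≤ v) : besselW u = besselW v := by
  have hcont : ContinuousOn besselW (Icc u v) := fun z hz =>
    ((hasDerivAt_besselW (lt_of_lt_of_le hu hz.1)).continuousAt).continuousWithinAt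
  have hdiff : ∀ z ∈ interior (Icc u v), HasDerivAt besselW 0 z := by
    rw [interior_Icc]
    exact fun z hz => hasDerivAt_besselW (lt_of_lt_of_le hu hz.1.le)
  have hmono : MonotoneOn besselW (Icc u v) := by
    apply monotoneOn_of_deriv_nonneg (convex_Icc u v) hcont
    · exact fun z hz => (hdiff z hz).differentiableAt.differentiableWithinAt
    · exact fun z hz => by rw [(hdiff z hz).deriv]
  have hanti : AntitoneOn besselW (Icc u v) := by
    apply antitoneOn_of_deriv_nonpos (convex_Icc u v) hcont
    · exact fun z hz => (hdiff z hz).differentiableAt.differentiableWithinAt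
    · exact fun z hz => by rw [(hdiff z hz).deriv]
  exact le_antisymm (hmono (left_mem_Icc.mpr huv) (right_mem_Icc.mpr huv) huv)
    (hanti (left_mem_Icc.mpr huv) (right_mem_Icc.mpr huv) huv)

lemma tendsto_besselW : Tendsto besselW (nhdsWithin 0 (Ioi 0)) (nhds 1) := by
  have hI0 : Tendsto (besselI 0) (nhdsWithin 0 (Ioi (0:ℝ))) (nhds 1) := by
    have := (continuous_besselI 0).tendsto 0
    rw [besselI_zero_zero] at this
    exact this.mono_left nhdsWithin_le_nhds
  have hI1 : Tendsto (besselI 1) (nhdsWithin 0 (Ioi (0:ℝ))) (nhds 0) := by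
    have := (continuous_besselI 1).tendsto 0
    rw [besselI_one_zero] at this
    exact this.mono_left nhdsWithin_le_nhds
  have hA : Tendsto (fun y => besselI 0 y * (y * besselJ 1 y)) (nhdsWithin 0 (Ioi (0:ℝ))) (nhds 1) := by
    have := hI0.mul tendsto_xJ1
    simpa using this
  have hB : Tendsto (fun y => (y * besselI 1 y) * besselJ 0 y) (nhdsWithin 0 (Ioi (0:ℝ))) (nhds 0) := by
    have hup : Tendsto (fun y => besselI 1 y * (y * besselJ 1 y)) (nhdsWithin 0 (Ioi (0:ℝ))) (nhds 0) := by
      have := hI1.mul tendsto_xJ1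
      simpa using this
    apply tendsto_of_tendsto_of_tendsto_of_le_of_le' tendsto_const_nhds hup
    · filter_upwards [self_mem_nhdsWithin] with y hy
      have hy' : (0:ℝ) < y := hy
      have h1 := besselI_nonneg 1 hy'.le
      have h2 := besselJ_pos hy' 0
      positivity
    · filter_upwards [self_mem_nhdsWithin] with y hy
      have hy' : (0:ℝ) < y := hy
      have h1 := besselI_nonneg 1 hy'.le
      have h2 := besselJ_zero_le_one hy'
      have h3 := besselJ_pos hy' 0
      calc y * besselI 1 y * besselJ 0 y ≤ y * besselI 1 y * besselJ 1 y := by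
            apply mul_le_mul_of_nonneg_left h2 (by positivity)
        _ = besselI 1 y * (y * besselJ 1 y) := by ring
  have := hA.add hB
  show Tendsto (fun y => besselI 0 y * (y * besselJ 1 y) + (y * besselI 1 y) * besselJ 0 y) _ _
  simpa using this

lemma besselW_eq_one {x : ℝ} (hx : 0 < x) : besselW x = 1 := by
  have hcongr : besselW =ᶠ[nhdsWithin 0 (Ioi (0:ℝ))] (fun _ => besselW x) := by
    filter_upwards [Ioo_mem_nhdsGT_of_mem (left_mem_Ico.mpr hx)] with y hy
    exact besselW_const hy.1 hy.2.le
  have h1 : Tendsto (fun _ : ℝ => besselW x) (nhdsWithin 0 (Ioi (0:ℝ))) (nhds 1) :=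
    tendsto_besselW.congr' hcongr
  exact (tendsto_nhds_unique tendsto_const_nhds h1)

lemma wronskian_besselK {x : ℝ} (hx : 0 < x) :
    x * (besselI 0 x * besselK 1 x + besselK 0 x * besselI 1 x) = 1 := by
  rw [besselK_zero_eq, besselK_one_eq]
  have := besselW_eq_one hx
  unfold besselW at this
  linarith [this]

noncomputable def besselG (a w : ℝ) : ℝ :=
  besselI 0 a * (w * besselJ 1 w) + besselJ 0 a * (w * besselI 1 w)

lemma hasDerivAt_besselG (a : ℝ) {w : ℝ} (hw : 0 < w) :
    HasDerivAt (besselG a)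
      (besselI 0 a * (-(w * besselJ 0 w)) + besselJ 0 a * (w * besselI 0 w)) w :=
  ((hasDerivAt_id_mul_besselJ_one hw).const_mul (besselI 0 a)).add
    ((hasDerivAt_id_mul_besselI_one w).const_mul (besselJ 0 a))

lemma besselG_pos {a w : ℝ} (ha : 0 < a) (hw : 0 < w) : 0 < besselG a w := by
  unfold besselG
  have h1 := besselI_zero_pos ha.le
  have h2 := besselJ_pos hw 1
  have h3 := besselJ_pos ha 0
  have h4 := besselI_nonneg 1 hw.le
  have : 0 < besselI 0 a * (w * besselJ 1 w) := by positivity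
  nlinarith [mul_nonneg (mul_nonneg h3.le hw.le) h4]

lemma strictAntiOn_besselG {a : ℝ} (ha : 0 < a) : StrictAntiOn (besselG a) (Ioc 0 a) := by
  apply strictAntiOn_of_deriv_neg (convex_Ioc 0 a)
  · intro z hz
    exact ((hasDerivAt_besselG a hz.1).continuousAt).continuousWithinAt
  · intro z hz
    rw [interior_Ioc] at hz
    rw [(hasDerivAt_besselG a hz.1).deriv]
    have h1 : besselJ 0 a < besselJ 0 z := strictAntiOn_besselJ_zero hz.1 (lt_trans hz.1 hz.2) hz.2
    have h2 : besselI 0 z ≤ besselI 0 a := besselI_mono 0 hz.1.le (le_trans hz.2.le le_rfl)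
    have h3 := besselI_zero_pos hz.1.le
    have h4 := besselJ_pos hz.1 0
    have h5 : besselJ 0 a * besselI 0 z < besselJ 0 z * besselI 0 z :=
      mul_lt_mul_of_pos_right h1 h3
    have h6 : besselJ 0 z * besselI 0 z ≤ besselJ 0 z * besselI 0 a :=
      mul_le_mul_of_nonneg_left h2 h4.le
    nlinarith [mul_lt_mul_of_pos_left (lt_of_lt_of_le h5 h6) hz.1]

lemma besselG_at_a {a : ℝ} (ha : 0 < a) : besselG a a = 1 := by
  have := besselW_eq_one ha
  unfold besselW at this
  unfold besselG
  linarith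

lemma tendsto_besselG (a : ℝ) :
    Tendsto (besselG a) (nhdsWithin 0 (Ioi 0)) (nhds (besselI 0 a)) := by
  have h1 : Tendsto (fun w => besselI 0 a * (w * besselJ 1 w)) (nhdsWithin 0 (Ioi (0:ℝ)))
      (nhds (besselI 0 a)) := by
    have := tendsto_xJ1.const_mul (besselI 0 a)
    simpa using this
  have h2 : Tendsto (fun w : ℝ => besselJ 0 a * (w * besselI 1 w)) (nhdsWithin 0 (Ioi (0:ℝ)))
      (nhds 0) := by
    have hcont : Tendsto (fun w : ℝ => w * besselI 1 w) (nhds 0) (nhds 0) := by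
      have := (continuous_id.mul (continuous_besselI 1)).tendsto 0
      simpa [besselI_one_zero, Pi.mul_def] using this
    have hc2 : Tendsto (fun w : ℝ => w * besselI 1 w) (nhdsWithin 0 (Ioi (0:ℝ))) (nhds 0) :=
      hcont.mono_left nhdsWithin_le_nhds
    have := hc2.const_mul (besselJ 0 a)
    simpa using this
  have := h1.add h2
  show Tendsto (fun w => besselI 0 a * (w * besselJ 1 w) + besselJ 0 a * (w * besselI 1 w)) _ _
  simpa using this

lemma besselG_le {a w : ℝ} (ha : 0 < a) (hw : w ∈ Ioc 0 a) : besselG a w ≤ besselI 0 a := by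
  apply ge_of_tendsto (tendsto_besselG a)
  filter_upwards [Ioo_mem_nhdsGT_of_mem (left_mem_Ico.mpr hw.1)] with y hy
  exact (strictAntiOn_besselG ha ⟨hy.1, le_trans hy.2.le hw.2⟩ hw hy.2).le

lemma one_le_besselG {a w : ℝ} (ha : 0 < a) (hw : w ∈ Ioc 0 a) : 1 ≤ besselG a w := by
  rcases eq_or_lt_of_le hw.2 with heq | hlt
  · rw [heq, besselG_at_a ha]
  · rw [← besselG_at_a ha]
    exact (strictAntiOn_besselG ha hw (right_mem_Ioc.mpr ha) hlt).le


/-- The diagonal `t ↦ ψ(t,t,T)` equals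
`1 / (2√(βt) (I_0(2√(βT)) K_1(2√(βt)) + K_0(2√(βT)) I_1(2√(βt))))` for `t > 0` (by the
Wronskian identity), is continuous on `[0,T]`, strictly increasing on `(0,T]`, equals `1`
at `t = T`, extends continuously to `t = 0` with value `1/I_0(2√(βT))`, and satisfies
`1/I_0(2√(βT)) ≤ ψ(t,t,T) ≤ 1` on `[0,T]`. -/
theorem psiKer_diagonal (β T : ℝ) (hβ : 0 < β) (hT : 0 < T) (φ : ℝ → ℝ)
    (hφ0 : φ 0 = 1 / besselI 0 (2 * Real.sqrt (β * T)))
    (hφ : ∀ t > (0 : ℝ),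
      φ t = 1 / (2 * Real.sqrt (β * t) *
        (besselI 0 (2 * Real.sqrt (β * T)) * besselK 1 (2 * Real.sqrt (β * t)) +
          besselK 0 (2 * Real.sqrt (β * T)) * besselI 1 (2 * Real.sqrt (β * t))))) :
    (∀ t > (0 : ℝ), psiKer β t t T = φ t) ∧
    ContinuousOn φ (Set.Icc 0 T) ∧
    StrictMonoOn φ (Set.Ioc 0 T) ∧
    φ T = 1 ∧
    Filter.Tendsto φ (nhdsWithin 0 (Set.Ioi 0)) (nhds (1 / besselI 0 (2 * Real.sqrt (β * T)))) ∧
    ∀ t ∈ Set.Icc (0 : ℝ) T,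
      1 / besselI 0 (2 * Real.sqrt (β * T)) ≤ φ t ∧ φ t ≤ 1 := by
  set a := 2 * Real.sqrt (β * T) with ha_def
  have ha : 0 < a := by
    rw [ha_def]
    have h : 0 < β * T := mul_pos hβ hT
    have := Real.sqrt_pos.mpr h
    linarith
  have hwpos : ∀ t : ℝ, 0 < t → 0 < 2 * Real.sqrt (β * t) := by
    intro t ht
    have h : 0 < β * t := mul_pos hβ ht
    have := Real.sqrt_pos.mpr h
    linarith
  have hwmem : ∀ t ∈ Ioc (0:ℝ) T, 2 * Real.sqrt (β * t) ∈ Ioc 0 a := by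
    intro t ht
    refine ⟨hwpos t ht.1, ?_⟩
    rw [ha_def]
    have h1 : β * t ≤ β * T := by nlinarith [ht.2]
    have := Real.sqrt_le_sqrt h1
    linarith
  have hwlt : ∀ t1 t2 : ℝ, 0 < t1 → t1 < t2 → 2 * Real.sqrt (β * t1) < 2 * Real.sqrt (β * t2) := by
    intro t1 t2 h1 h12
    have := Real.sqrt_lt_sqrt (mul_nonneg hβ.le h1.le) (by nlinarith : β * t1 < β * t2)
    linarith
  have key : ∀ t : ℝ, 0 < t →
      2 * Real.sqrt (β * t) * (besselI 0 a * besselK 1 (2 * Real.sqrt (β * t)) +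
        besselK 0 a * besselI 1 (2 * Real.sqrt (β * t))) = besselG a (2 * Real.sqrt (β * t)) := by
    intro t ht
    rw [besselK_zero_eq, besselK_one_eq]
    unfold besselG
    ring
  have hφG : ∀ t > (0:ℝ), φ t = 1 / besselG a (2 * Real.sqrt (β * t)) := by
    intro t ht
    rw [hφ t ht, key t ht]
  have hGpos : ∀ t : ℝ, 0 < t → 0 < besselG a (2 * Real.sqrt (β * t)) :=
    fun t ht => besselG_pos ha (hwpos t ht)
  -- limit statement (conclusion 5), proved first for reuse
  have hwt_tend : Tendsto (fun t : ℝ => 2 * Real.sqrt (β * t)) (nhdsWithin 0 (Ioi 0))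
      (nhdsWithin 0 (Ioi 0)) := by
    apply tendsto_nhdsWithin_of_tendsto_nhds_of_eventually_within
    · have hc : Continuous (fun t : ℝ => 2 * Real.sqrt (β * t)) := by fun_prop
      have h0 := hc.tendsto 0
      simp only [mul_zero, Real.sqrt_zero] at h0
      exact h0.mono_left nhdsWithin_le_nhds
    · filter_upwards [self_mem_nhdsWithin] with t ht
      exact hwpos t ht
  have h5 : Tendsto φ (nhdsWithin 0 (Ioi 0)) (nhds (1 / besselI 0 a)) := by
    have hGc : Tendsto (fun t : ℝ => besselG a (2 * Real.sqrt (β * t))) (nhdsWithin 0 (Ioi 0))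
        (nhds (besselI 0 a)) := (tendsto_besselG a).comp hwt_tend
    have hdiv : Tendsto (fun t : ℝ => 1 / besselG a (2 * Real.sqrt (β * t)))
        (nhdsWithin 0 (Ioi 0)) (nhds (1 / besselI 0 a)) :=
      tendsto_const_nhds.div hGc (ne_of_gt (besselI_zero_pos ha.le))
    apply hdiv.congr'
    filter_upwards [self_mem_nhdsWithin] with t ht
    exact (hφG t ht).symm
  refine ⟨?_, ?_, ?_, ?_, h5, ?_⟩
  · -- psiKer diagonal
    intro t ht
    have hwt := hwpos t ht
    rw [hφG t ht]
    unfold psiKer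
    rw [← ha_def]
    have hN := wronskian_besselK hwt
    have hD := key t ht
    have hG := hGpos t ht
    have hDpos : 0 < besselI 0 a * besselK 1 (2 * Real.sqrt (β * t)) +
        besselK 0 a * besselI 1 (2 * Real.sqrt (β * t)) := by
      nlinarith [hD, hG, hwt]
    rw [div_eq_div_iff hDpos.ne' hG.ne']
    linear_combination (besselI 0 a * besselK 1 (2 * Real.sqrt (β * t)) +
        besselK 0 a * besselI 1 (2 * Real.sqrt (β * t))) * hN
      - (besselI 0 (2 * Real.sqrt (β * t)) * besselK 1 (2 * Real.sqrt (β * t)) +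
        besselK 0 (2 * Real.sqrt (β * t)) * besselI 1 (2 * Real.sqrt (β * t))) * hD
  · -- continuity
    intro t htmem
    rcases eq_or_lt_of_le htmem.1 with h0 | hpos
    · subst h0
      show Tendsto φ (nhdsWithin 0 (Icc 0 T)) (nhds (φ 0))
      have hle : nhdsWithin (0:ℝ) (Icc 0 T) ≤ nhdsWithin 0 {0} ⊔ nhdsWithin 0 (Ioi 0) := by
        rw [← nhdsWithin_union]
        apply nhdsWithin_mono
        intro s hs
        rcases eq_or_lt_of_le hs.1 with h | h
        · exact Or.inl h.symm
        · exact Or.inr h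
      apply Tendsto.mono_left _ hle
      rw [tendsto_sup]
      constructor
      · rw [nhdsWithin_singleton]
        exact tendsto_pure_nhds φ 0
      · rw [hφ0]
        exact h5
    · apply ContinuousAt.continuousWithinAt
      have hwt := hwpos t hpos
      have hG : ContinuousAt (besselG a) (2 * Real.sqrt (β * t)) := by
        show ContinuousAt (fun w => besselI 0 a * (w * besselJ 1 w) + besselJ 0 a * (w * besselI 1 w)) _
        exact (continuousAt_const.mul (continuousAt_id.mul (continuousAt_besselJ hwt 1))).add
          (continuousAt_const.mul (continuousAt_id.mul ((continuous_besselI 1).continuousAt)))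
      have hq : ContinuousAt (fun s : ℝ => 2 * Real.sqrt (β * s)) t := by fun_prop
      have hcomp : ContinuousAt (fun s : ℝ => besselG a (2 * Real.sqrt (β * s))) t :=
        ContinuousAt.comp (g := besselG a) (f := fun s : ℝ => 2 * Real.sqrt (β * s)) hG hq
      have hGc : ContinuousAt (fun s : ℝ => 1 / besselG a (2 * Real.sqrt (β * s))) t :=
        continuousAt_const.div hcomp (ne_of_gt (hGpos t hpos))
      apply hGc.congr
      filter_upwards [isOpen_Ioi.mem_nhds hpos] with s hs
      exact (hφG s hs).symm
  · -- strict mono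
    intro t1 h1 t2 h2 h12
    rw [hφG t1 h1.1, hφG t2 h2.1]
    have hw1 := hwmem t1 h1
    have hw2 := hwmem t2 h2
    have hlt := hwlt t1 t2 h1.1 h12
    have hGlt : besselG a (2 * Real.sqrt (β * t2)) < besselG a (2 * Real.sqrt (β * t1)) :=
      strictAntiOn_besselG ha hw1 hw2 hlt
    have hG2 := besselG_pos ha hw2.1
    exact one_div_lt_one_div_of_lt hG2 hGlt
  · -- φ T = 1
    rw [hφG T hT, ← ha_def, besselG_at_a ha]
    norm_num
  · -- bounds
    intro t htmem
    rcases eq_or_lt_of_le htmem.1 with h0 | hpos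
    · rw [← h0, hφ0]
      refine ⟨le_refl _, ?_⟩
      rw [div_le_one (besselI_zero_pos ha.le)]
      exact one_le_besselI_zero ha.le
    · have hwm := hwmem t ⟨hpos, htmem.2⟩
      rw [hφG t hpos]
      have hGp := hGpos t hpos
      constructor
      · exact one_div_le_one_div_of_le hGp (besselG_le ha hwm)
      · rw [div_le_one hGp]
        exact one_le_besselG ha hwm
end
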